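/- For all flags φ, ψ, the product φψ is again a flag, and φ ≤ φψ and ψ ≤ φψ. -/

import Mathlib

open scoped Classical
open Set

variable {L : Type*} [LieRing L] [LieAlgebra ℝ L] [FiniteDimensional ℝ L]

/-- A flag: a nonempty chain of Lie subalgebras, each strictly containing `H`. -/
def IsFlag (H : LieSubalgebra ℝ L) (s : Finset (LieSubalgebra ℝ L)) : Prop :=
  s.Nonempty ∧ IsChain (· ≤ ·) (s : Set (LieSubalgebra ℝ L)) ∧ ∀ K ∈ s, H < K

/-- The maximum of a flag. -/
noncomputable def flagMax (s : Finset (LieSubalgebra ℝ L)) : LieSubalgebra ℝ L :=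
  sSup (s : Set (LieSubalgebra ℝ L))

/-- An elementary move between flags. -/
def FlagStep (H : LieSubalgebra ℝ L) (s t : Finset (LieSubalgebra ℝ L)) : Prop :=
  IsFlag H s ∧ IsFlag H t ∧
    ((∃ K : LieSubalgebra ℝ L, flagMax s < K ∧ t = insert K s) ∨
      (∃ K ∈ s, K ≠ flagMax s ∧ t = s.erase K))

/-- The partial order on flags. -/
def FlagLE (H : LieSubalgebra ℝ L) (s t : Finset (LieSubalgebra ℝ L)) : Prop :=
  Relation.ReflTransGen (FlagStep H) s t

/-- The product of two flags. -/
noncomputable def flagProd (s t : Finset (LieSubalgebra ℝ L)) : Finset (LieSubalgebra ℝ L) :=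
  if ∃ K ∈ s, flagMax t < K then (s ∩ t) ∪ s.filter (fun K => flagMax t < K)
  else if ∃ K ∈ t, flagMax s < K then (s ∩ t) ∪ t.filter (fun K => flagMax s < K)
  else insert (flagMax s ⊔ flagMax t) (s ∩ t)

/-!
Deleting non-maximal members one at a time takes a flag to any subset of it that contains its
maximum, and adjoining the members of a chain lying above the maximum, in increasing order, takes
a flag to its union with that chain. In the first case of the product, `φ` reaches `φψ` by
deletions, while `ψ` first adjoins the members of `φ` above `max ψ` and then deletes. In the last
case each factor adjoins `⟨max φ, max ψ⟩` (unless it is already its maximum) and then deletes.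
-/

theorem IsChain.supClosed {α : Type*} [SemilatticeSup α] {s : Set α}
    (hs : IsChain (· ≤ ·) s) : SupClosed s := by
  intro a ha b hb
  rcases hs.total ha hb with hab | hba
  · rwa [sup_eq_right.2 hab]
  · rwa [sup_eq_left.2 hba]

section Flags

omit [FiniteDimensional ℝ L]

variable {H K J : LieSubalgebra ℝ L} {s t u F : Finset (LieSubalgebra ℝ L)}

theorem le_flagMax (hK : K ∈ s) : K ≤ flagMax s :=
  le_sSup (Finset.mem_coe.2 hK)

theorem flagMax_union : flagMax (s ∪ t) = flagMax s ⊔ flagMax t := by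
  simp only [flagMax, Finset.coe_union, sSup_union]

theorem flagMax_insert : flagMax (insert K s) = K ⊔ flagMax s := by
  simp only [flagMax, Finset.coe_insert, sSup_insert]

theorem flagMax_eq_of_subset (hu : u ⊆ s) (hmax : flagMax s ∈ u) : flagMax u = flagMax s :=
  le_antisymm (sSup_le_sSup (Finset.coe_subset.2 hu)) (le_flagMax hmax)

theorem flagMax_mem_of_isChain (hne : s.Nonempty)
    (hs : IsChain (· ≤ ·) (s : Set (LieSubalgebra ℝ L))) : flagMax s ∈ s :=
  hs.supClosed.sSup_mem_of_nonempty s.finite_toSet (Finset.coe_nonempty.2 hne) subset_rfl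

theorem IsFlag.flagMax_mem (hs : IsFlag H s) : flagMax s ∈ s :=
  flagMax_mem_of_isChain hs.1 hs.2.1

theorem IsFlag.subset (hs : IsFlag H s) (hu : u ⊆ s) (hne : u.Nonempty) : IsFlag H u :=
  ⟨hne, hs.2.1.mono (Finset.coe_subset.2 hu), fun K hK => hs.2.2 K (hu hK)⟩

theorem IsFlag.insert_of_flagMax_lt (hs : IsFlag H s) (hK : flagMax s < K) :
    IsFlag H (insert K s) := by
  refine ⟨Finset.insert_nonempty K s, ?_, ?_⟩
  · rw [Finset.coe_insert]
    exact hs.2.1.insert fun J hJ _ => Or.inr ((le_flagMax hJ).trans hK.le)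
  · intro J hJ
    rcases Finset.mem_insert.1 hJ with rfl | hJs
    · exact (hs.2.2 _ hs.flagMax_mem).trans hK
    · exact hs.2.2 J hJs

theorem FlagLE.isFlag (h : FlagLE H s t) (hs : IsFlag H s) : IsFlag H t := by
  rcases h.cases_tail with rfl | ⟨_, _, hstep⟩
  · exact hs
  · exact hstep.2.1

theorem flagLE_insert (hs : IsFlag H s) (hK : flagMax s < K) : FlagLE H s (insert K s) :=
  .single ⟨hs, hs.insert_of_flagMax_lt hK, .inl ⟨K, hK, rfl⟩⟩

theorem flagLE_erase (hs : IsFlag H s) (hK : K ∈ s) (hKmax : K ≠ flagMax s) :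
    FlagLE H s (s.erase K) :=
  .single ⟨hs, hs.subset (s.erase_subset K) ⟨_, Finset.mem_erase.2 ⟨hKmax.symm, hs.flagMax_mem⟩⟩,
    .inr ⟨K, hK, hKmax, rfl⟩⟩

theorem flagLE_of_subset (hs : IsFlag H s) (hu : u ⊆ s) (hmax : flagMax s ∈ u) :
    FlagLE H s u := by
  induction s using Finset.strongInduction with
  | _ s ih =>
  rcases hu.eq_or_ssubset with rfl | hssub
  · exact .refl
  obtain ⟨K, hKs, hKu⟩ := Finset.exists_of_ssubset hssub
  have hKmax : K ≠ flagMax s := fun h => hKu (h ▸ hmax)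
  have hstep := flagLE_erase hs hKs hKmax
  have hmax' : flagMax (s.erase K) = flagMax s :=
    flagMax_eq_of_subset (s.erase_subset K) (Finset.mem_erase.2 ⟨hKmax.symm, hu hmax⟩)
  exact hstep.trans <| ih _ (Finset.erase_ssubset hKs) (hstep.isFlag hs)
    (Finset.subset_erase.2 ⟨hu, hKu⟩) (hmax' ▸ hmax)

theorem flagLE_union_of_flagMax_lt (ht : IsFlag H t)
    (hF : IsChain (· ≤ ·) (F : Set (LieSubalgebra ℝ L))) (hlt : ∀ K ∈ F, flagMax t < K) :
    FlagLE H t (t ∪ F) := by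
  induction F using Finset.strongInduction with
  | _ F ih =>
  rcases F.eq_empty_or_nonempty with rfl | hne
  · rw [Finset.union_empty]
    exact .refl
  set m := flagMax F
  have hmF : m ∈ F := flagMax_mem_of_isChain hne hF
  have hle' : FlagLE H t (t ∪ F.erase m) :=
    ih _ (Finset.erase_ssubset hmF) (hF.mono (Finset.coe_subset.2 (F.erase_subset m)))
      fun K hK => hlt K (Finset.mem_of_mem_erase hK)
  have hbelow : ∀ K ∈ t ∪ F.erase m, K < m := by
    intro K hK
    rcases Finset.mem_union.1 hK with hKt | hKF
    · exact (le_flagMax hKt).trans_lt (hlt m hmF)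
    · exact (le_flagMax (Finset.mem_of_mem_erase hKF)).lt_of_ne (Finset.ne_of_mem_erase hKF)
  have hstep := flagLE_insert (hle'.isFlag ht) (hbelow _ (hle'.isFlag ht).flagMax_mem)
  rw [← Finset.union_insert, Finset.insert_erase hmF] at hstep
  exact hle'.trans hstep

theorem flagLE_inter_union_filter (hs : IsFlag H s) (ht : IsFlag H t)
    (h : ∃ K ∈ s, flagMax t < K) :
    FlagLE H s ((s ∩ t) ∪ s.filter (fun K => flagMax t < K)) ∧
      FlagLE H t ((s ∩ t) ∪ s.filter (fun K => flagMax t < K)) := by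
  obtain ⟨K, hKs, hK⟩ := h
  set F := s.filter (fun K => flagMax t < K)
  have hts : flagMax t ≤ flagMax s := hK.le.trans (le_flagMax hKs)
  have hmaxF : flagMax s ∈ F :=
    Finset.mem_filter.2 ⟨hs.flagMax_mem, hK.trans_le (le_flagMax hKs)⟩
  have htF : FlagLE H t (t ∪ F) :=
    flagLE_union_of_flagMax_lt ht (hs.2.1.mono (Finset.coe_subset.2 (s.filter_subset _)))
      fun J hJ => (Finset.mem_filter.1 hJ).2
  have hmaxtF : flagMax (t ∪ F) = flagMax s := by
    rw [flagMax_union, flagMax_eq_of_subset (s.filter_subset _) hmaxF, sup_eq_right.2 hts]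
  refine ⟨flagLE_of_subset hs (Finset.union_subset Finset.inter_subset_left (s.filter_subset _))
    (Finset.mem_union_right _ hmaxF), htF.trans ?_⟩
  exact flagLE_of_subset (htF.isFlag ht)
    (Finset.union_subset_union Finset.inter_subset_right subset_rfl)
    (hmaxtF ▸ Finset.mem_union_right _ hmaxF)

theorem flagLE_insert_of_subset (hs : IsFlag H s) (hu : u ⊆ s) (hJ : flagMax s ≤ J) :
    FlagLE H s (insert J u) := by
  rcases hJ.eq_or_lt with rfl | hlt
  · exact flagLE_of_subset hs (Finset.insert_subset hs.flagMax_mem hu) (Finset.mem_insert_self _ _)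
  · have hstep := flagLE_insert hs hlt
    refine hstep.trans (flagLE_of_subset (hstep.isFlag hs) (Finset.insert_subset_insert J hu) ?_)
    rw [flagMax_insert, sup_eq_left.2 hlt.le]
    exact Finset.mem_insert_self J u

end Flags

theorem flagProd_isFlag_and_le_general (H : LieSubalgebra ℝ L)
    (s t : Finset (LieSubalgebra ℝ L)) (hs : IsFlag H s) (ht : IsFlag H t) :
    IsFlag H (flagProd s t) ∧ FlagLE H s (flagProd s t) ∧ FlagLE H t (flagProd s t) := by
  suffices h : FlagLE H s (flagProd s t) ∧ FlagLE H t (flagProd s t) from ⟨h.1.isFlag hs, h⟩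
  unfold flagProd
  split_ifs with hst hts
  · exact flagLE_inter_union_filter hs ht hst
  · rw [Finset.inter_comm]
    exact (flagLE_inter_union_filter ht hs hts).symm
  · exact ⟨flagLE_insert_of_subset hs Finset.inter_subset_left le_sup_left,
      flagLE_insert_of_subset ht Finset.inter_subset_right le_sup_right⟩

theorem flagProd_isFlag_and_le (H : LieSubalgebra ℝ L) (hprop : H ≠ ⊤)
    (s t : Finset (LieSubalgebra ℝ L)) (hs : IsFlag H s) (ht : IsFlag H t) :
    IsFlag H (flagProd s t) ∧ FlagLE H s (flagProd s t) ∧ FlagLE H t (flagProd s t) :=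
  flagProd_isFlag_and_le_general H s t hs ht
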